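/- Let ρ be a probability measure on a measurable space Θ, let L be a Markov kernel from Θ to a measurable space 𝒴, let f : Θ × 𝒴 → ℝ be bounded and measurable, g(θ) := ∫ f(θ, y) L(θ)(dy), v(θ) := Var_{L(θ)}(f(θ, ·)), and N := ∫ g dρ. For ε, δ ≥ 0 let V(ε, δ) := ∫_Θ (1 + ε·(Ψ_δ(θ) − ∫Ψ_δ dρ))·(∫_𝒴 (1 + δ·(f(θ,y) − g(θ)))·f(θ, y) L(θ)(dy)) dρ(θ) with Ψ_δ(θ) := g(θ) + δ·v(θ) be the expected cost under the penalty-form worst-case measure. Then the worst-case posterior sensitivity satisfies lim_{ε → 0⁺} (V(ε, 0) − N)/ε = Var_ρ(g), and the worst-case likelihood sensitivity satisfies lim_{δ → 0⁺} (V(0, δ) − N)/δ = ∫_Θ v dρ. -/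

import Mathlib

/-!
Both perturbations are affine in their parameter. Integrating the density `1 + t (h - m)` against
`h` with `m = ∫ h` gives `m + t ∫ (h - m)²`, since the cross term `m ∫ (h - m)` vanishes. With
`δ = 0` this identity is applied on `ρ` to `h = g`; with `ε = 0` it is applied on each fibre
`L θ` to `h = f(θ, ·)` and then integrated over `ρ`. The difference quotients are therefore
constant, equal to `Var_ρ(g)` and `∫ v dρ` respectively.
-/

open MeasureTheory ProbabilityTheory Filter Topology

variable {Ω : Type*} [MeasurableSpace Ω]

/-- Mean of `f` under `P`. -/
noncomputable def meanP (P : Measure Ω) (f : Ω → ℝ) : ℝ := ∫ ω, f ω ∂P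

/-- Variance of `f` under `P`. -/
noncomputable def varP (P : Measure Ω) (f : Ω → ℝ) : ℝ :=
  ∫ ω, (f ω - meanP P f) ^ 2 ∂P

/-- Conditional expected cost `g(θ) = ∫ f(θ,y) L(θ)(dy)`. -/
noncomputable def condMean {Θ 𝒴 : Type*} [MeasurableSpace Θ] [MeasurableSpace 𝒴]
    (L : Kernel Θ 𝒴) (f : Θ × 𝒴 → ℝ) (θ : Θ) : ℝ :=
  ∫ y, f (θ, y) ∂(L θ)

/-- Conditional variance `v(θ) = Var_{L(θ)}(f(θ,·))`. -/
noncomputable def condVar {Θ 𝒴 : Type*} [MeasurableSpace Θ] [MeasurableSpace 𝒴]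
    (L : Kernel Θ 𝒴) (f : Θ × 𝒴 → ℝ) (θ : Θ) : ℝ :=
  ∫ y, (f (θ, y) - condMean L f θ) ^ 2 ∂(L θ)

/-- Expected cost under the penalty-form worst-case measure: outer density
`η_ε(θ) = 1 + ε(Ψ_δ(θ) − ∫Ψ_δ dρ)` with `Ψ_δ(θ) = g(θ) + δ·v(θ)`, and inner density
`q^θ_δ(y) = 1 + δ(f(θ,y) − g(θ))`. -/
noncomputable def penaltyWC {Θ 𝒴 : Type*} [MeasurableSpace Θ] [MeasurableSpace 𝒴]
    (ρ : Measure Θ) (L : Kernel Θ 𝒴) (f : Θ × 𝒴 → ℝ) (ε δ : ℝ) : ℝ :=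
  ∫ θ,
    (1 + ε * ((condMean L f θ + δ * condVar L f θ)
        - ∫ θ', (condMean L f θ' + δ * condVar L f θ') ∂ρ))
      * (∫ y, (1 + δ * (f (θ, y) - condMean L f θ)) * f (θ, y) ∂(L θ)) ∂ρ

lemma integral_one_add_mul_sub_integral_mul {α : Type*} [MeasurableSpace α] {μ : Measure α}
    [IsProbabilityMeasure μ] {h : α → ℝ} (hh : MemLp h 2 μ) (t : ℝ) :
    ∫ x, (1 + t * (h x - ∫ x', h x' ∂μ)) * h x ∂μ
      = ∫ x, h x ∂μ + t * ∫ x, (h x - ∫ x', h x' ∂μ) ^ 2 ∂μ := by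
  set m := ∫ x', h x' ∂μ
  have hint : Integrable h μ := hh.integrable one_le_two
  have hcent : Integrable (fun x => h x - m) μ := hint.sub (integrable_const m)
  have hsq : Integrable (fun x => (h x - m) ^ 2) μ := (hh.sub (memLp_const m)).integrable_sq
  calc ∫ x, (1 + t * (h x - m)) * h x ∂μ
      = ∫ x, (h x + t * (h x - m) ^ 2 + t * m * (h x - m)) ∂μ := by
        congr 1 with x; ring
    _ = m + t * ∫ x, (h x - m) ^ 2 ∂μ + t * m * ∫ x, (h x - m) ∂μ := by
        rw [integral_add, integral_add, integral_const_mul, integral_const_mul]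
        exacts [hint, hsq.const_mul t, hint.add (hsq.const_mul t), hcent.const_mul _]
    _ = m + t * ∫ x, (h x - m) ^ 2 ∂μ := by
        rw [integral_sub hint (integrable_const m)]; simp [m]

lemma tendsto_sub_div_nhdsNE_of_eq_add_mul {F : ℝ → ℝ} {a b : ℝ} (hF : ∀ t, F t = a + t * b) :
    Tendsto (fun t => (F t - a) / t) (𝓝[≠] 0) (𝓝 b) :=
  tendsto_const_nhds.congr' <| eventually_nhdsWithin_of_forall fun t (ht : t ≠ 0) => by
    simp only [hF]; field_simp; ring

section KernelIntegral

variable {Θ 𝒴 : Type*} [MeasurableSpace Θ] [MeasurableSpace 𝒴] {L : Kernel Θ 𝒴} [IsMarkovKernel L]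
  {F : Θ × 𝒴 → ℝ} {C : ℝ}

lemma abs_integral_kernel_le (hC : ∀ p, |F p| ≤ C) (θ : Θ) : |∫ y, F (θ, y) ∂L θ| ≤ C := by
  simpa using norm_integral_le_of_norm_le_const (μ := L θ) (f := fun y => F (θ, y))
    (ae_of_all _ fun y => (Real.norm_eq_abs _).trans_le (hC (θ, y)))

lemma memLp_integral_kernel_of_abs_le (hF : Measurable F) (hC : ∀ p, |F p| ≤ C)
    (ρ : Measure Θ) [IsFiniteMeasure ρ] (p : ENNReal) :
    MemLp (fun θ => ∫ y, F (θ, y) ∂L θ) p ρ :=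
  MemLp.of_bound (hF.stronglyMeasurable.integral_kernel_prod_right' (κ := L)).aestronglyMeasurable
    C (ae_of_all _ fun θ => (Real.norm_eq_abs _).trans_le (abs_integral_kernel_le hC θ))

end KernelIntegral

section Penalty

variable {Θ 𝒴 : Type*} [MeasurableSpace Θ] [MeasurableSpace 𝒴] (ρ : Measure Θ)
  {L : Kernel Θ 𝒴} [IsMarkovKernel L] {f : Θ × 𝒴 → ℝ} {C : ℝ}

lemma memLp_condMean [IsFiniteMeasure ρ] (hf : Measurable f) (hC : ∀ p, |f p| ≤ C)
    (p : ENNReal) : MemLp (condMean L f) p ρ :=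
  memLp_integral_kernel_of_abs_le hf hC ρ p

lemma memLp_condVar [IsFiniteMeasure ρ] (hf : Measurable f) (hC : ∀ p, |f p| ≤ C)
    (p : ENNReal) : MemLp (condVar L f) p ρ := by
  have hg : Measurable (condMean L f) :=
    (hf.stronglyMeasurable.integral_kernel_prod_right' (κ := L)).measurable
  refine memLp_integral_kernel_of_abs_le (C := (2 * C) ^ 2)
    ((hf.sub (hg.comp measurable_fst)).pow_const 2) (fun q => ?_) ρ p
  rw [abs_pow]
  refine pow_le_pow_left₀ (abs_nonneg _) ?_ 2
  have hg_le : |condMean L f q.1| ≤ C := abs_integral_kernel_le hC q.1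
  simp only [Pi.sub_apply, Function.comp_apply]
  linarith [abs_sub (f q) (condMean L f q.1), hC q]

lemma integral_one_add_mul_sub_condMean_mul (hf : Measurable f) (hC : ∀ p, |f p| ≤ C)
    (θ : Θ) (δ : ℝ) :
    ∫ y, (1 + δ * (f (θ, y) - condMean L f θ)) * f (θ, y) ∂L θ
      = condMean L f θ + δ * condVar L f θ :=
  integral_one_add_mul_sub_integral_mul (MemLp.of_bound
    (hf.comp measurable_prodMk_left).aestronglyMeasurable C (ae_of_all _ fun y => hC (θ, y))) δ

lemma penaltyWC_zero_right [IsProbabilityMeasure ρ] (hf : Measurable f) (hC : ∀ p, |f p| ≤ C)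
    (ε : ℝ) :
    penaltyWC ρ L f ε 0 = ∫ θ, condMean L f θ ∂ρ + ε * varP ρ (condMean L f) := by
  simp only [penaltyWC, zero_mul, add_zero, one_mul]
  exact integral_one_add_mul_sub_integral_mul (memLp_condMean ρ hf hC 2) ε

lemma penaltyWC_zero_left [IsFiniteMeasure ρ] (hf : Measurable f) (hC : ∀ p, |f p| ≤ C)
    (δ : ℝ) :
    penaltyWC ρ L f 0 δ = ∫ θ, condMean L f θ ∂ρ + δ * ∫ θ, condVar L f θ ∂ρ := by
  simp only [penaltyWC, zero_mul, add_zero, one_mul, integral_one_add_mul_sub_condMean_mul hf hC]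
  rw [integral_add ((memLp_condMean ρ hf hC 1).integrable le_rfl)
    (((memLp_condVar ρ hf hC 1).integrable le_rfl).const_mul δ), integral_const_mul]

end Penalty

/-- Worst-case posterior and likelihood sensitivities in the penalty formulation with
modified χ²-divergence: `lim_{ε→0⁺} (V(ε,0) − N)/ε = Var_ρ(g)` and
`lim_{δ→0⁺} (V(0,δ) − N)/δ = ∫ v dρ`, where `N = ∫ g dρ` is the nominal expected cost. -/
theorem penalty_sensitivities
    {Θ 𝒴 : Type*} [MeasurableSpace Θ] [MeasurableSpace 𝒴]
    (ρ : Measure Θ) [IsProbabilityMeasure ρ]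
    (L : Kernel Θ 𝒴) [IsMarkovKernel L]
    (f : Θ × 𝒴 → ℝ) (hf : Measurable f) (hf_bdd : ∃ C : ℝ, ∀ p, |f p| ≤ C) :
    Tendsto
      (fun ε : ℝ => (penaltyWC ρ L f ε 0 - ∫ θ, condMean L f θ ∂ρ) / ε)
      (𝓝[>] (0 : ℝ)) (𝓝 (varP ρ (condMean L f))) ∧
    Tendsto
      (fun δ : ℝ => (penaltyWC ρ L f 0 δ - ∫ θ, condMean L f θ ∂ρ) / δ)
      (𝓝[>] (0 : ℝ)) (𝓝 (∫ θ, condVar L f θ ∂ρ)) := by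
  obtain ⟨C, hC⟩ := hf_bdd
  exact ⟨(tendsto_sub_div_nhdsNE_of_eq_add_mul (penaltyWC_zero_right ρ hf hC)).mono_left
      (nhdsGT_le_nhdsNE 0),
    (tendsto_sub_div_nhdsNE_of_eq_add_mul (penaltyWC_zero_left ρ hf hC)).mono_left
      (nhdsGT_le_nhdsNE 0)⟩
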